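/- For the constant flow on the torus ℝ²/ℤ² with direction c = (c₁, c₂) where c₁/c₂ is irrational (c₂ ≠ 0), every orbit {[x + t·c] : t ∈ ℝ} is dense in the torus. -/
import Mathlib

/-- The lattice `ℤ² ⊆ ℝ²` as an additive subgroup. -/
def intLattice : AddSubgroup (ℝ × ℝ) :=
  (AddSubgroup.zmultiples (1 : ℝ)).prod (AddSubgroup.zmultiples (1 : ℝ))

/-- The torus `ℝ²/ℤ²`. -/
abbrev Torus2 := (ℝ × ℝ) ⧸ intLattice

lemma dense_int_add_int_smul (α : ℝ) (h : Irrational α) :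
    Dense {r : ℝ | ∃ m n : ℤ, r = (m : ℝ) + (n : ℝ) * α} := by
  set S : AddSubgroup ℝ := AddSubgroup.zmultiples (1 : ℝ) ⊔ AddSubgroup.zmultiples α with hS
  have hset : {r : ℝ | ∃ m n : ℤ, r = (m : ℝ) + (n : ℝ) * α} = (S : Set ℝ) := by
    ext r
    simp only [Set.mem_setOf_eq, SetLike.mem_coe, hS, AddSubgroup.mem_sup,
      AddSubgroup.mem_zmultiples_iff, zsmul_eq_mul]
    constructor
    · rintro ⟨m, n, rfl⟩
      exact ⟨(m : ℝ), ⟨m, by simp⟩, (n : ℝ) * α, ⟨n, rfl⟩, rfl⟩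
    · rintro ⟨y, ⟨m, rfl⟩, z, ⟨n, rfl⟩, rfl⟩
      exact ⟨m, n, by simp⟩
  rw [hset]
  rcases S.dense_or_cyclic with hd | ⟨a, ha⟩
  · exact hd
  · exfalso
    rw [← AddSubgroup.zmultiples_eq_closure] at ha
    have h1 : (1 : ℝ) ∈ S := le_sup_left (α := AddSubgroup ℝ) (AddSubgroup.mem_zmultiples 1)
    have h2 : α ∈ S := le_sup_right (α := AddSubgroup ℝ) (AddSubgroup.mem_zmultiples α)
    rw [ha, AddSubgroup.mem_zmultiples_iff] at h1 h2
    obtain ⟨m, hm⟩ := h1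
    obtain ⟨n, hn⟩ := h2
    rw [zsmul_eq_mul] at hm hn
    have hm0 : (m : ℝ) ≠ 0 := by
      intro h0; rw [h0, zero_mul] at hm; exact one_ne_zero hm.symm
    have ha0 : a = 1 / m := by field_simp [eq_comm] at hm ⊢; linarith [hm]
    apply h
    refine ⟨(n : ℚ) / (m : ℚ), ?_⟩
    have hmq : (m : ℝ) ≠ 0 := hm0
    push_cast
    rw [← hn, ha0]
    field_simp
  
/-- For the constant flow `Φ(t,[x]) = [x + t·c]` on the torus with irrational slope
`c₁/c₂` (and `c₂ ≠ 0`), every orbit is dense. -/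
theorem torus_irrational_flow_dense (c : ℝ × ℝ) (hc : c.2 ≠ 0)
    (hirr : Irrational (c.1 / c.2)) (x : ℝ × ℝ) :
    Dense (Set.range fun t : ℝ => (QuotientAddGroup.mk (x + t • c) : Torus2)) := by
  set α := c.1 / c.2 with hα
  -- the saturated set in ℝ²
  set D : Set (ℝ × ℝ) :=
    {p | ∃ t : ℝ, ∃ m n : ℤ, p = x + t • c + ((m : ℝ), (n : ℝ))} with hD
  have hDdense : Dense D := by
    rw [Metric.dense_iff]
    rintro ⟨a, b⟩ r hr
    have h1 := dense_int_add_int_smul α hirr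
    rw [Metric.dense_iff] at h1
    obtain ⟨s, hs_ball, m, n, rfl⟩ := h1 (a - x.1 - (b - x.2) * α) r hr
    rw [Metric.mem_ball, Real.dist_eq] at hs_ball
    set t : ℝ := (b - x.2 + (n : ℝ)) / c.2 with ht
    refine ⟨(x + t • c + ((m : ℝ), ((-n : ℤ) : ℝ))), ?_, t, m, -n, rfl⟩
    rw [Metric.mem_ball, Prod.dist_eq]
    have h2 : (x + t • c + ((m : ℝ), ((-n : ℤ) : ℝ))).2 = b := by
      simp only [Prod.snd_add, Prod.smul_snd, smul_eq_mul, ht]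
      push_cast
      field_simp
      ring
    have h1' : (x + t • c + ((m : ℝ), ((-n : ℤ) : ℝ))).1
        = x.1 + (b - x.2 + (n : ℝ)) * α + (m : ℝ) := by
      simp only [Prod.fst_add, Prod.smul_fst, smul_eq_mul, ht, hα]
      field_simp
    rw [h1', h2]
    simp only [Real.dist_eq]
    rw [sub_self, abs_zero]
    have : |x.1 + (b - x.2 + (n : ℝ)) * α + (m : ℝ) - a|
        = |(m : ℝ) + (n : ℝ) * α - (a - x.1 - (b - x.2) * α)| := by
      ring_nf
    rw [max_lt_iff]
    exact ⟨by rw [this]; exact hs_ball, hr⟩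
  -- push density to the quotient
  intro q
  obtain ⟨p, rfl⟩ := QuotientAddGroup.mk_surjective (s := intLattice) q
  have hmaps : Set.MapsTo (QuotientAddGroup.mk : ℝ × ℝ → Torus2) D
      (Set.range fun t : ℝ => (QuotientAddGroup.mk (x + t • c) : Torus2)) := by
    rintro p ⟨t, m, n, rfl⟩
    refine ⟨t, ?_⟩
    rw [QuotientAddGroup.eq_iff_sub_mem]
    have : x + t • c - (x + t • c + ((m : ℝ), (n : ℝ)))
        = ((((-m : ℤ)) : ℝ), (((-n : ℤ)) : ℝ)) := by
      simp [Prod.ext_iff]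
    rw [this]
    exact ⟨⟨-m, by simp⟩, ⟨-n, by simp⟩⟩
  exact map_mem_closure continuous_quotient_mk' (hDdense p) hmaps
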